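/- arXiv:2411.18026 — 2 statements merged into one kernel-verified Lean document; each statement's English description precedes it below -/
import Mathlib

section
/- Suppose the family (x_i)_{i∈ι} of vectors x_i ∈ ℂ^{n} solves the original system, i.e., A_i x_i + Σ_{j≠i} U_i R_{ij} V_j x_j = f_i for every i ∈ ι. Then the family (y_i)_{i∈ι} defined by y_i := V_i x_i solves the compressed system, i.e., Ã_i y_i + Σ_{j≠i} R_{ij} y_j = f̃_i for every i ∈ ι. -/
open Matrix

/-! Eliminating `x` from `A x + U s = f` gives `V x = V A⁻¹ f - (V A⁻¹ U) s`; applying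
`(V A⁻¹ U)⁻¹` to this is the compressed equation. In the block system, `s` is the coupling
`∑_{j ≠ i} R i j (V j x j)`, which only sees the other blocks through `y j = V j x j`. -/

namespace Matrix

theorem sum_mul_mul_mulVec {ι m n q r α : Type*} [Fintype n] [Fintype q] [Fintype r]
    [NonUnitalSemiring α] (U : Matrix m n α) (R : ι → Matrix n q α) (V : ι → Matrix q r α)
    (x : ι → r → α) (s : Finset ι) :
    ∑ j ∈ s, (U * R j * V j) *ᵥ x j = U *ᵥ ∑ j ∈ s, R j *ᵥ (V j *ᵥ x j) := by
  simp only [mulVec_sum, mulVec_mulVec, Matrix.mul_assoc]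

variable {m p α : Type*} [Fintype m] [DecidableEq m] [Fintype p] [DecidableEq p] [CommRing α]

theorem inv_mulVec_mulVec_add_eq_of_mulVec_add_mulVec_eq {A : Matrix m m α}
    {U : Matrix m p α} {V : Matrix p m α} {x f : m → α} {s : p → α}
    (hA : IsUnit A) (hVAU : IsUnit (V * A⁻¹ * U)) (h : A *ᵥ x + U *ᵥ s = f) :
    (V * A⁻¹ * U)⁻¹ *ᵥ (V *ᵥ x) + s = (V * A⁻¹ * U)⁻¹ *ᵥ ((V * A⁻¹) *ᵥ f) := by
  have hx : x = A⁻¹ *ᵥ (f - U *ᵥ s) := by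
    rw [← h, add_sub_cancel_right, mulVec_mulVec,
      nonsing_inv_mul _ ((isUnit_iff_isUnit_det A).mp hA), one_mulVec]
  have hcancel : (V * A⁻¹ * U)⁻¹ *ᵥ ((V * A⁻¹ * U) *ᵥ s) = s := by
    rw [mulVec_mulVec, nonsing_inv_mul _ ((isUnit_iff_isUnit_det _).mp hVAU), one_mulVec]
  rw [hx, mulVec_mulVec (M := V), mulVec_sub, mulVec_sub, mulVec_mulVec (v := s),
    hcancel, sub_add_cancel]

end Matrix

theorem upward_step_general {ι : Type*} [Fintype ι] [DecidableEq ι] {n k : ℕ}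
    (A : ι → Matrix (Fin n) (Fin n) ℂ)
    (U : ι → Matrix (Fin n) (Fin k) ℂ)
    (V : ι → Matrix (Fin k) (Fin n) ℂ)
    (R : ι → ι → Matrix (Fin k) (Fin k) ℂ)
    (f : ι → Fin n → ℂ)
    (hA : ∀ i, IsUnit (A i))
    (hVAU : ∀ i, IsUnit (V i * (A i)⁻¹ * U i))
    (x : ι → Fin n → ℂ)
    (hx : ∀ i, A i *ᵥ x i
        + ∑ j ∈ Finset.univ.erase i, (U i * R i j * V j) *ᵥ x j = f i) :
    ∀ i, (V i * (A i)⁻¹ * U i)⁻¹ *ᵥ (V i *ᵥ x i)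
        + ∑ j ∈ Finset.univ.erase i, R i j *ᵥ (V j *ᵥ x j)
      = (V i * (A i)⁻¹ * U i)⁻¹ *ᵥ ((V i * (A i)⁻¹) *ᵥ f i) := fun i =>
  inv_mulVec_mulVec_add_eq_of_mulVec_add_mulVec_eq (hA i) (hVAU i) <| by
    rw [← sum_mul_mul_mulVec]
    exact hx i

/-- Upward step of the Martinsson–Rokhlin-type fast direct solver:
if `(x i)` solves the original system `A i *ᵥ x i + ∑_{j ≠ i} U i * R i j * V j *ᵥ x j = f i`,
then `y i := V i *ᵥ x i` solves the compressed system
`Ã i *ᵥ y i + ∑_{j ≠ i} R i j *ᵥ y j = f̃ i`, where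
`Ã i = (V i * (A i)⁻¹ * U i)⁻¹` and `f̃ i = Ã i *ᵥ (V i * (A i)⁻¹ *ᵥ f i)`. -/
theorem upward_step {ι : Type*} [Fintype ι] [DecidableEq ι] {n k : ℕ}
    (hn : 0 < n) (hk : 0 < k)
    (A : ι → Matrix (Fin n) (Fin n) ℂ)
    (U : ι → Matrix (Fin n) (Fin k) ℂ)
    (V : ι → Matrix (Fin k) (Fin n) ℂ)
    (R : ι → ι → Matrix (Fin k) (Fin k) ℂ)
    (f : ι → Fin n → ℂ)
    (hA : ∀ i, IsUnit (A i))
    (hVAU : ∀ i, IsUnit (V i * (A i)⁻¹ * U i))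
    (x : ι → Fin n → ℂ)
    (hx : ∀ i, A i *ᵥ x i
        + ∑ j ∈ Finset.univ.erase i, (U i * R i j * V j) *ᵥ x j = f i) :
    ∀ i, (V i * (A i)⁻¹ * U i)⁻¹ *ᵥ (V i *ᵥ x i)
        + ∑ j ∈ Finset.univ.erase i, R i j *ᵥ (V j *ᵥ x j)
      = (V i * (A i)⁻¹ * U i)⁻¹ *ᵥ ((V i * (A i)⁻¹) *ᵥ f i) :=
  upward_step_general A U V R f hA hVAU x hx
end

section
/- Suppose the family (x_i)_{i∈ι} of vectors x_i ∈ ℂ^{n} solves the original system, i.e., A_i x_i + Σ_{j≠i} U_i R_{ij} V_j x_j = f_i for every i ∈ ι, and set y_i := V_i x_i. Then for every i ∈ ι the downward recovery formula holds: x_i = A_i^{-1} f_i − A_i^{-1} U_i f̃_i + A_i^{-1} U_i Ã_i y_i. -/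
/-!
Collecting the off-diagonal terms into `s = Σ_{j≠i} R_{ij} V_j x_j`, the `i`-th equation reads
`A_i x_i + U_i s = f_i`, so `x_i = A_i⁻¹ f_i - A_i⁻¹ U_i s`. Applying `V_i` gives
`y_i = V_i A_i⁻¹ f_i - (V_i A_i⁻¹ U_i) s`, which determines `s = Ã_i (V_i A_i⁻¹ f_i - y_i)`;
substituting back yields the formula.
-/

open Matrix

namespace Matrix

variable {m n R : Type*} [Fintype m] [Fintype n] [DecidableEq n] [CommRing R]

theorem nonsing_inv_mulVec_mulVec {A : Matrix n n R} (hA : IsUnit A) (v : n → R) :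
    A⁻¹ *ᵥ (A *ᵥ v) = v := by
  rw [mulVec_mulVec, nonsing_inv_mul A ((isUnit_iff_isUnit_det A).mp hA), one_mulVec]

theorem eq_nonsing_inv_mulVec_sub_of_mulVec_add_mulVec_eq {A : Matrix n n R} {U : Matrix n m R}
    {x f : n → R} {s : m → R} (hA : IsUnit A) (h : A *ᵥ x + U *ᵥ s = f) :
    x = A⁻¹ *ᵥ f - (A⁻¹ * U) *ᵥ s := by
  rw [← h, mulVec_add, nonsing_inv_mulVec_mulVec hA, mulVec_mulVec, add_sub_cancel_right]

theorem eq_of_eq_nonsing_inv_mulVec_sub [DecidableEq m] {A : Matrix n n R} {U : Matrix n m R}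
    {V : Matrix m n R} {x f : n → R} {s : m → R} (hB : IsUnit (V * A⁻¹ * U))
    (hx : x = A⁻¹ *ᵥ f - (A⁻¹ * U) *ᵥ s) :
    s = (V * A⁻¹ * U)⁻¹ *ᵥ ((V * A⁻¹) *ᵥ f) - (V * A⁻¹ * U)⁻¹ *ᵥ (V *ᵥ x) := by
  have hVx : V *ᵥ x = (V * A⁻¹) *ᵥ f - (V * A⁻¹ * U) *ᵥ s := by
    rw [hx, mulVec_sub, mulVec_mulVec, mulVec_mulVec, Matrix.mul_assoc V]
  rw [hVx, mulVec_sub, nonsing_inv_mulVec_mulVec hB, sub_sub_cancel]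

theorem eq_downward_of_mulVec_add_mulVec_eq [DecidableEq m] {A : Matrix n n R} {U : Matrix n m R}
    {V : Matrix m n R} {x f : n → R} {s : m → R} (hA : IsUnit A) (hB : IsUnit (V * A⁻¹ * U))
    (h : A *ᵥ x + U *ᵥ s = f) :
    x = A⁻¹ *ᵥ f - (A⁻¹ * U) *ᵥ ((V * A⁻¹ * U)⁻¹ *ᵥ ((V * A⁻¹) *ᵥ f))
      + (A⁻¹ * U * (V * A⁻¹ * U)⁻¹) *ᵥ (V *ᵥ x) := by
  have hx := eq_nonsing_inv_mulVec_sub_of_mulVec_add_mulVec_eq hA h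
  have hs := eq_of_eq_nonsing_inv_mulVec_sub hB hx
  conv_lhs => rw [hx, hs]
  rw [mulVec_sub, ← mulVec_mulVec (V *ᵥ x), sub_add]

end Matrix

theorem downward_formula_general {ι : Type*} [Fintype ι] [DecidableEq ι] {n k : ℕ}
    (A : ι → Matrix (Fin n) (Fin n) ℂ)
    (U : ι → Matrix (Fin n) (Fin k) ℂ)
    (V : ι → Matrix (Fin k) (Fin n) ℂ)
    (R : ι → ι → Matrix (Fin k) (Fin k) ℂ)
    (f : ι → Fin n → ℂ)
    (hA : ∀ i, IsUnit (A i))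
    (hVAU : ∀ i, IsUnit (V i * (A i)⁻¹ * U i))
    (x : ι → Fin n → ℂ)
    (hx : ∀ i, A i *ᵥ x i
        + ∑ j ∈ Finset.univ.erase i, (U i * R i j * V j) *ᵥ x j = f i)
    (y : ι → Fin k → ℂ)
    (hy : ∀ i, y i = V i *ᵥ x i) :
    ∀ i, x i = (A i)⁻¹ *ᵥ f i
        - ((A i)⁻¹ * U i) *ᵥ
            ((V i * (A i)⁻¹ * U i)⁻¹ *ᵥ ((V i * (A i)⁻¹) *ᵥ f i))
        + ((A i)⁻¹ * U i * (V i * (A i)⁻¹ * U i)⁻¹) *ᵥ y i := by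
  intro i
  rw [hy i]
  refine eq_downward_of_mulVec_add_mulVec_eq (hA i) (hVAU i)
    (s := ∑ j ∈ Finset.univ.erase i, (R i j * V j) *ᵥ x j) ?_
  simpa only [mulVec_sum, mulVec_mulVec, Matrix.mul_assoc] using hx i

/-- Downward conversion formula of the Martinsson–Rokhlin-type fast direct solver:
if `(x i)` solves the original system and `y i := V i *ᵥ x i`, then
`x i = (A i)⁻¹ *ᵥ f i - (A i)⁻¹ * U i *ᵥ f̃ i + (A i)⁻¹ * U i * Ã i *ᵥ y i`,
where `Ã i = (V i * (A i)⁻¹ * U i)⁻¹` and `f̃ i = Ã i *ᵥ (V i * (A i)⁻¹ *ᵥ f i)`. -/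
theorem downward_formula {ι : Type*} [Fintype ι] [DecidableEq ι] {n k : ℕ}
    (hn : 0 < n) (hk : 0 < k)
    (A : ι → Matrix (Fin n) (Fin n) ℂ)
    (U : ι → Matrix (Fin n) (Fin k) ℂ)
    (V : ι → Matrix (Fin k) (Fin n) ℂ)
    (R : ι → ι → Matrix (Fin k) (Fin k) ℂ)
    (f : ι → Fin n → ℂ)
    (hA : ∀ i, IsUnit (A i))
    (hVAU : ∀ i, IsUnit (V i * (A i)⁻¹ * U i))
    (x : ι → Fin n → ℂ)
    (hx : ∀ i, A i *ᵥ x i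
        + ∑ j ∈ Finset.univ.erase i, (U i * R i j * V j) *ᵥ x j = f i)
    (y : ι → Fin k → ℂ)
    (hy : ∀ i, y i = V i *ᵥ x i) :
    ∀ i, x i = (A i)⁻¹ *ᵥ f i
        - ((A i)⁻¹ * U i) *ᵥ
            ((V i * (A i)⁻¹ * U i)⁻¹ *ᵥ ((V i * (A i)⁻¹) *ᵥ f i))
        + ((A i)⁻¹ * U i * (V i * (A i)⁻¹ * U i)⁻¹) *ᵥ y i :=
  downward_formula_general A U V R f hA hVAU x hx y hy
end
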